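/- Let E : Fin N × Fin D → Fin M be a (K, ε)-extractor with K an integer, 0 < K ≤ N, and let S be a set of left vertices with #S ≤ K. Then the number of elements of S that are dangerous in S is less than 2εK. -/

import Mathlib

/-!
Let `B` be the set of right vertices that are bad for `S`. Enlarging `S` to a set of exactly `K`
left vertices only adds edges, so the extractor property bounds the number of edges from `S`
(or from any subset of it) into `B` by `DK (#B/M + ε)`. Each bad vertex receives more than
`2DK/M` of these edges, which forces `#B/M < ε`. All `D` edges of a dangerous vertex land in `B`,
so `D · #dangerous < DK (#B/M + ε) < 2εDK`.
-/

open Finset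

def edgeCount {N D M : ℕ} (E : Fin N × Fin D → Fin M)
    (S : Finset (Fin N)) (Y : Finset (Fin M)) : ℕ :=
  ((S ×ˢ (univ : Finset (Fin D))).filter (fun p => E p ∈ Y)).card

def IsExtractor {N D M : ℕ} (E : Fin N × Fin D → Fin M) (K : ℕ) (ε : ℝ) : Prop :=
  ∀ (S : Finset (Fin N)) (Y : Finset (Fin M)), K ≤ S.card →
    |(edgeCount E S Y : ℝ) / (D * S.card) - (Y.card : ℝ) / M| < ε

def BadFor {N D M : ℕ} (E : Fin N × Fin D → Fin M) (K : ℕ)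
    (S : Finset (Fin N)) (z : Fin M) : Prop :=
  (2 * D * K : ℝ) / M <
    (((S ×ˢ (univ : Finset (Fin D))).filter (fun p => E p = z)).card : ℝ)

def DangerousIn {N D M : ℕ} (E : Fin N × Fin D → Fin M) (K : ℕ)
    (S : Finset (Fin N)) (x : Fin N) : Prop :=
  ∀ i : Fin D, BadFor E K S (E (x, i))

section EdgeCount

variable {N D M : ℕ} (E : Fin N × Fin D → Fin M)

lemma edgeCount_mono {S S' : Finset (Fin N)} (h : S ⊆ S') (Y : Finset (Fin M)) :
    edgeCount E S Y ≤ edgeCount E S' Y :=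
  card_le_card (filter_subset_filter _ (product_subset_product_left h))

lemma edgeCount_eq_sum (S : Finset (Fin N)) (Y : Finset (Fin M)) :
    edgeCount E S Y = ∑ z ∈ Y, #{p ∈ S ×ˢ univ | E p = z} :=
  (sum_card_fiberwise_eq_card_filter _ _ _).symm

lemma edgeCount_eq_card_mul {T : Finset (Fin N)} {Y : Finset (Fin M)}
    (h : ∀ x ∈ T, ∀ i, E (x, i) ∈ Y) : edgeCount E T Y = #T * D := by
  rw [edgeCount, filter_true_of_mem fun p hp => h p.1 (mem_product.1 hp).1 p.2,
    card_product, card_univ, Fintype.card_fin]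

lemma mul_card_le_edgeCount_of_forall_badFor (K : ℕ) (S : Finset (Fin N)) {Y : Finset (Fin M)}
    (hY : ∀ z ∈ Y, BadFor E K S z) :
    (2 * D * K : ℝ) / M * #Y ≤ edgeCount E S Y := by
  rw [edgeCount_eq_sum, Nat.cast_sum, mul_comm, ← nsmul_eq_mul]
  exact card_nsmul_le_sum _ _ _ fun z hz => (hY z hz).le

end EdgeCount

namespace IsExtractor

variable {N D M K : ℕ} {ε : ℝ} {E : Fin N × Fin D → Fin M}

lemma edgeCount_lt (hext : IsExtractor E K ε) (hD : 0 < D) {S : Finset (Fin N)}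
    (hKS : K ≤ #S) (hS : 0 < #S) (Y : Finset (Fin M)) :
    (edgeCount E S Y : ℝ) < (#Y / M + ε) * (D * #S) := by
  have hDS : (0 : ℝ) < D * #S := by positivity
  have := (abs_lt.1 (hext S Y hKS)).2
  rwa [sub_lt_iff_lt_add', div_lt_iff₀ hDS] at this

lemma edgeCount_lt_of_card_le (hext : IsExtractor E K ε) (hD : 0 < D) (hK : 0 < K)
    (hKN : K ≤ N) {S : Finset (Fin N)} (hS : #S ≤ K) (Y : Finset (Fin M)) :
    (edgeCount E S Y : ℝ) < (#Y / M + ε) * (D * K) := by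
  obtain ⟨S', hSS', hS'⟩ := S.exists_superset_card_eq hS (by simpa using hKN)
  calc (edgeCount E S Y : ℝ) ≤ edgeCount E S' Y := mod_cast edgeCount_mono E hSS' Y
    _ < (#Y / M + ε) * (D * K) := by
      simpa only [hS'] using hext.edgeCount_lt hD hS'.ge (hS' ▸ hK) Y

lemma card_div_lt_of_forall_badFor (hext : IsExtractor E K ε) (hD : 0 < D) (hK : 0 < K)
    (hKN : K ≤ N) {S : Finset (Fin N)} (hS : #S ≤ K) {Y : Finset (Fin M)}
    (hY : ∀ z ∈ Y, BadFor E K S z) : (#Y : ℝ) / M < ε := by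
  have hDK : (0 : ℝ) < D * K := by positivity
  have hlower := mul_card_le_edgeCount_of_forall_badFor E K S hY
  have hupper := hext.edgeCount_lt_of_card_le hD hK hKN hS Y
  have : 2 * (#Y / M : ℝ) * (D * K) < (#Y / M + ε) * (D * K) := by
    calc 2 * (#Y / M : ℝ) * (D * K) = (2 * D * K : ℝ) / M * #Y := by ring
      _ < (#Y / M + ε) * (D * K) := hlower.trans_lt hupper
  linarith [lt_of_mul_lt_mul_right this hDK.le]

end IsExtractor

theorem card_dangerous_lt_general {N D M : ℕ} (E : Fin N × Fin D → Fin M)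
    (K : ℕ) (ε : ℝ) (hK : 0 < K) (hKN : K ≤ N) (hD : 0 < D)
    (hext : IsExtractor E K ε)
    (S : Finset (Fin N)) (hS : S.card ≤ K) :
    (({x : Fin N | x ∈ S ∧ DangerousIn E K S x}.ncard : ℝ)) < 2 * ε * K := by
  classical
  set B : Finset (Fin M) := univ.filter (BadFor E K S)
  set T : Finset (Fin N) := S.filter (DangerousIn E K S)
  have hB : (#B : ℝ) / M < ε :=
    hext.card_div_lt_of_forall_badFor hD hK hKN hS fun z hz => (mem_filter.1 hz).2
  have hTB : edgeCount E T B = #T * D :=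
    edgeCount_eq_card_mul E fun x hx i => mem_filter.2 ⟨mem_univ _, (mem_filter.1 hx).2 i⟩
  have hT := hext.edgeCount_lt_of_card_le hD hK hKN ((card_filter_le S (DangerousIn E K S)).trans hS) B
  have hD' : (0 : ℝ) < D := by exact_mod_cast hD
  have hcard : {x : Fin N | x ∈ S ∧ DangerousIn E K S x}.ncard = #T := by
    rw [← Set.ncard_coe_finset, coe_filter]
  rw [hcard]
  refine lt_of_mul_lt_mul_right ?_ hD'.le
  calc (#T : ℝ) * D = edgeCount E T B := mod_cast hTB.symm
    _ < (#B / M + ε) * (D * K) := hT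
    _ ≤ 2 * ε * K * D := by nlinarith [hB, (by positivity : (0 : ℝ) ≤ D * K)]

/-- Lemma (Fortnow et al.): for a `(K, ε)`-extractor and a set `S` of at most
`K` left vertices, the number of elements of `S` that are dangerous in `S` is
less than `2εK`. -/
theorem card_dangerous_lt {N D M : ℕ} (E : Fin N × Fin D → Fin M)
    (K : ℕ) (ε : ℝ) (hK : 0 < K) (hKN : K ≤ N) (hD : 0 < D) (hM : 0 < M)
    (hext : IsExtractor E K ε)
    (S : Finset (Fin N)) (hS : S.card ≤ K) :
    (({x : Fin N | x ∈ S ∧ DangerousIn E K S x}.ncard : ℝ)) < 2 * ε * K :=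
  card_dangerous_lt_general E K ε hK hKN hD hext S hS
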